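/- Completeness of qudit tetrahedral bases: for any real phases α_{z,x} (indexed by (z,x) ∈ ℤ_d^{n−1} × ℤ_d), the equal-weight superposition ψ = d^{−n/2} Σ_{z,x} e^{iα_{z,x}} Φ^{(d)}_{z,x} is a unit vector, and the orbit {U_g ψ : g ∈ ℤ_dⁿ} is an orthonormal family of dⁿ vectors, i.e. ⟨U_g ψ, U_h ψ⟩ = 1 if g = h and 0 if g ≠ h; hence it is an orthonormal basis of (ℂ^d)^{⊗n}. -/

import Mathlib

open Matrix Complex Finset

/-- ω = exp(2πi/d). -/
noncomputable def omg (d : ℕ) : ℂ := Complex.exp (2 * Real.pi * Complex.I / d)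

/-- Generalized Pauli Z on ℂ^d: Z|j⟩ = ω^j |j⟩. -/
noncomputable def Zd (d : ℕ) : Matrix (ZMod d) (ZMod d) ℂ :=
  Matrix.diagonal fun j => omg d ^ j.val

/-- Generalized Pauli X on ℂ^d: X|j⟩ = |j+1 mod d⟩. -/
noncomputable def Xd (d : ℕ) : Matrix (ZMod d) (ZMod d) ℂ :=
  Matrix.of fun j k => if j = k + 1 then 1 else 0

/-- Discrete Fourier transform H = d^{-1/2} Σ ω^{jk} |j⟩⟨k|. -/
noncomputable def Hd (d : ℕ) : Matrix (ZMod d) (ZMod d) ℂ :=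
  Matrix.of fun j k => (Real.sqrt d : ℂ)⁻¹ * omg d ^ (j.val * k.val)

/-- Tensor product of single-qudit operators, as a matrix on (ℂ^d)^{⊗n}. -/
noncomputable def tensorOp {d n : ℕ} (A : Fin n → Matrix (ZMod d) (ZMod d) ℂ) :
    Matrix (Fin n → ZMod d) (Fin n → ZMod d) ℂ :=
  Matrix.of fun v w => ∏ i, A i (v i) (w i)

/-- Single-site operator A acting on qudit i (identity elsewhere). -/
noncomputable def single {d n : ℕ} (i : Fin n) (A : Matrix (ZMod d) (ZMod d) ℂ) :
    Matrix (Fin n → ZMod d) (Fin n → ZMod d) ℂ :=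
  tensorOp fun j => if j = i then A else 1

/-- The inner product ⟨f, g⟩ = Σ conj(f v) g v (antilinear in the first argument). -/
noncomputable def dotc {ι : Type*} [Fintype ι] (f g : ι → ℂ) : ℂ :=
  ∑ v, (starRingEnd ℂ) (f v) * g v

/-- Computational basis vector |a⟩. -/
noncomputable def ket {ι : Type*} [DecidableEq ι] (a : ι) : ι → ℂ :=
  fun v => if v = a then 1 else 0

/-- The unitaries U_g, g = (z₁,…,z_{n−1},x) ∈ ℤ_dⁿ:
U_g = ∏_{i=1}^{n−1} (Z^{(i)}(Z^{(i+1)})⁻¹)^{zᵢ} · (X⊗⋯⊗X)^x.  -/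
noncomputable def Ug (d n : ℕ) [NeZero d] [NeZero n] (g : Fin n → ZMod d) :
    Matrix (Fin n → ZMod d) (Fin n → ZMod d) ℂ :=
  (((List.finRange (n - 1)).map fun i =>
      (_root_.single (⟨i.val, by have := i.isLt; omega⟩ : Fin n) (Zd d) *
          (_root_.single (⟨i.val + 1, by have := i.isLt; omega⟩ : Fin n) (Zd d))⁻¹)
        ^ (g ⟨i.val, by have := i.isLt; omega⟩).val).prod) *
    (tensorOp fun _ : Fin n => Xd d)
      ^ (g ⟨n - 1, by have := Nat.pos_of_ne_zero (NeZero.ne n); omega⟩).val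

/-- The joint eigenstates Φ^{(d)}_{z,x} = d^{-1/2} Σ_k ω^{−kx} |s₁+k,…,s_{n−1}+k,k⟩,
with sᵢ = zᵢ + ⋯ + z_{n−1}. -/
noncomputable def Phi (d n : ℕ) [NeZero d] (z : Fin (n - 1) → ZMod d) (x : ZMod d) :
    (Fin n → ZMod d) → ℂ :=
  fun v => (Real.sqrt d : ℂ)⁻¹ * ∑ k : ZMod d,
    (omg d ^ (k.val * x.val))⁻¹ *
      (if ∀ i : Fin n, v i =
          (if h : i.val < n - 1
            then ∑ j ∈ Finset.univ.filter (fun j : Fin (n - 1) => (⟨i.val, h⟩ : Fin (n - 1)) ≤ j), z j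
            else 0) + k
        then 1 else 0)

/-!
The states `Φ_{z,x}` form an orthonormal basis of joint eigenvectors of the commuting family
`U_g`: `Φ_{z,x}` is the Fourier transform in `k` of the `d` computational basis vectors
`|s₁+k, …, s_{n−1}+k, k⟩`, which every `Z⁽ⁱ⁾(Z⁽ⁱ⁺¹⁾)⁻¹` fixes up to the phase `ω^{zᵢ}` and
`X ⊗ ⋯ ⊗ X` permutes cyclically, so that `U_g Φ_{z,x} = ω^{⟨g, (z, x)⟩} Φ_{z,x}`. Every
coefficient of `ψ` in this basis has modulus `d^{−n/2}`, hence
`⟨U_g ψ, U_h ψ⟩ = d^{−n} Σ_{z,x} ω^{⟨h − g, (z, x)⟩} = δ_{g,h}` by orthogonality of the characters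
of `ℤ_dⁿ`. Finally, `dⁿ` orthonormal vectors span the `dⁿ`-dimensional space.
-/

local notation "𝕖" => ZMod.stdAddChar

lemma AddChar.map_finset_sum {A M ι : Type*} [AddCommMonoid A] [CommMonoid M]
    (ψ : AddChar A M) (s : Finset ι) (f : ι → A) : ψ (∑ i ∈ s, f i) = ∏ i ∈ s, ψ (f i) := by
  induction s using Finset.cons_induction with
  | empty => simp
  | cons a s ha ih => rw [sum_cons, prod_cons, AddChar.map_add_eq_mul, ih]

section Character
variable {d : ℕ} [NeZero d]

lemma omg_pow_val (j : ZMod d) : omg d ^ j.val = 𝕖 j := by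
  rw [omg, ← Complex.exp_nat_mul, ZMod.stdAddChar_apply, ZMod.toCircle_apply]
  congr 1
  ring

lemma Zd_eq_diagonal : Zd d = diagonal fun j => 𝕖 j := by
  simp only [Zd, omg_pow_val]

lemma sum_stdAddChar_mul (a : ZMod d) :
    ∑ t : ZMod d, 𝕖 (a * t) = if a = 0 then (d : ℂ) else 0 := by
  simp_rw [mul_comm a]
  rw [AddChar.sum_mulShift a (ZMod.isPrimitive_stdAddChar d), ZMod.card, Nat.cast_ite,
    Nat.cast_zero]

end Character

section Dotc
variable {ι κ : Type*} [Fintype κ]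

lemma dotc_eq_inner (f g : κ → ℂ) :
    dotc f g = inner ℂ (WithLp.toLp 2 f) (WithLp.toLp 2 g) := by
  rw [EuclideanSpace.inner_toLp_toLp, dotc, dotProduct]
  exact Finset.sum_congr rfl fun _ _ => mul_comm _ _

lemma orthonormal_toLp_of_dotc {Φ : ι → κ → ℂ} [DecidableEq ι]
    (hΦ : ∀ p q, dotc (Φ p) (Φ q) = if p = q then 1 else 0) :
    Orthonormal ℂ fun p => WithLp.toLp 2 (Φ p) :=
  orthonormal_iff_ite.mpr fun p q => by rw [← dotc_eq_inner, hΦ]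

lemma dotc_sum_smul_of_orthonormal [Fintype ι] {Φ : ι → κ → ℂ} [DecidableEq ι]
    (hΦ : ∀ p q, dotc (Φ p) (Φ q) = if p = q then 1 else 0) (c c' : ι → ℂ) :
    dotc (∑ p, c p • Φ p) (∑ p, c' p • Φ p) = ∑ p, starRingEnd ℂ (c p) * c' p := by
  rw [dotc_eq_inner, WithLp.toLp_sum, WithLp.toLp_sum]
  simp_rw [WithLp.toLp_smul]
  exact (orthonormal_toLp_of_dotc hΦ).inner_sum c c' univ

lemma span_eq_top_of_dotc_orthonormal [Fintype ι] {Φ : ι → κ → ℂ} [DecidableEq ι]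
    (hΦ : ∀ p q, dotc (Φ p) (Φ q) = if p = q then 1 else 0)
    (hcard : Fintype.card ι = Fintype.card κ) :
    Submodule.span ℂ (Set.range Φ) = ⊤ := by
  let toFun := WithLp.linearEquiv 2 ℂ (κ → ℂ)
  have hli : LinearIndependent ℂ Φ :=
    (orthonormal_toLp_of_dotc hΦ).linearIndependent.map' toFun.toLinearMap toFun.ker
  exact hli.span_eq_top_of_card_eq_finrank' (by rw [Module.finrank_fintype_fun_eq_card, hcard])

end Dotc

section Eigen
variable {m R : Type*} [Fintype m] [DecidableEq m] [CommSemiring R]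

lemma pow_mulVec_of_mulVec_eq_smul {M : Matrix m m R} {w : m → R} {c : R}
    (h : M *ᵥ w = c • w) (k : ℕ) : (M ^ k) *ᵥ w = c ^ k • w := by
  induction k with
  | zero => simp
  | succ k ih => rw [pow_succ', ← mulVec_mulVec, ih, mulVec_smul, h, smul_smul, pow_succ]

lemma list_prod_mulVec_of_mulVec_eq_smul {α : Type*}
    {F : α → Matrix m m R} {w : m → R} {c : α → R} (h : ∀ a, F a *ᵥ w = c a • w)
    (l : List α) : (l.map F).prod *ᵥ w = (l.map c).prod • w := by
  induction l with
  | nil => simp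
  | cons a l ih =>
    rw [List.map_cons, List.map_cons, List.prod_cons, List.prod_cons, ← mulVec_mulVec, ih,
      mulVec_smul, h, smul_smul, mul_comm]

lemma diagonal_mulVec_eq_smul {f w : m → R} {c : R}
    (h : ∀ v, w v ≠ 0 → f v = c) : diagonal f *ᵥ w = c • w := by
  ext v
  rw [mulVec_diagonal, Pi.smul_apply, smul_eq_mul]
  by_cases hv : w v = 0
  · simp [hv]
  · rw [h v hv]

end Eigen

section TensorOp
variable {d n : ℕ}

lemma tensorOp_diagonal (f : Fin n → ZMod d → ℂ) :
    tensorOp (fun i => diagonal (f i)) = diagonal fun v => ∏ i, f i (v i) := by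
  ext v w
  simp only [tensorOp, of_apply, diagonal_apply, Finset.prod_ite_zero, Finset.mem_univ,
    forall_const, funext_iff]

lemma single_diagonal (j : Fin n) (f : ZMod d → ℂ) :
    _root_.single j (diagonal f) = diagonal fun v => f (v j) := by
  have hfactor : (fun i => if i = j then diagonal f else 1) =
      fun i => diagonal (if i = j then f else 1) := by
    ext1 i
    split_ifs <;> simp
  rw [_root_.single, hfactor, tensorOp_diagonal]
  simp only [ite_apply, Pi.one_apply, Finset.prod_ite_eq', Finset.mem_univ, if_true]

lemma single_Zd_mul_inv [NeZero d] (j j' : Fin n) :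
    _root_.single j (Zd d) * (_root_.single j' (Zd d))⁻¹ =
      diagonal fun v => 𝕖 (v j - v j') := by
  have hinv : (_root_.single j' (Zd d))⁻¹ = diagonal fun v => 𝕖 (-(v j')) := by
    refine inv_eq_right_inv ?_
    rw [Zd_eq_diagonal, single_diagonal, diagonal_mul_diagonal]
    simp [← AddChar.map_add_eq_mul]
  rw [hinv, Zd_eq_diagonal, single_diagonal, diagonal_mul_diagonal]
  simp [sub_eq_add_neg, AddChar.map_add_eq_mul]

lemma tensorOp_Xd_mulVec [NeZero d] (f : (Fin n → ZMod d) → ℂ) :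
    tensorOp (fun _ => Xd d) *ᵥ f = fun v => f (v - 1) := by
  ext v
  have hentry : ∀ w, tensorOp (fun _ => Xd d) v w = if w = v - 1 then 1 else 0 := by
    intro w
    simp only [tensorOp, Xd, of_apply, Finset.prod_boole, Finset.mem_univ, forall_const,
      funext_iff, eq_sub_iff_add_eq]
    exact if_congr (forall_congr' fun _ => eq_comm) rfl rfl
  simp [mulVec, dotProduct, hentry]

end TensorOp

-- Reducible, so that `rw` matches it against the literal `⟨n - 1, _⟩` in the definition of `Ug`.
abbrev lastIdx (n : ℕ) [NeZero n] : Fin n := ⟨n - 1, Nat.sub_one_lt (NeZero.ne n)⟩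

section Pairing
variable {d n : ℕ} [NeZero n]

def pairing (g : Fin n → ZMod d) (z : Fin (n - 1) → ZMod d) (x : ZMod d) : ZMod d :=
  ∑ i : Fin (n - 1), g ⟨i, by omega⟩ * z i + g (lastIdx n) * x

lemma pairing_sub (g h : Fin n → ZMod d) (z : Fin (n - 1) → ZMod d) (x : ZMod d) :
    pairing h z x - pairing g z x = pairing (h - g) z x := by
  simp only [pairing, Pi.sub_apply, sub_mul, Finset.sum_sub_distrib]
  ring

lemma eq_zero_iff_init_and_last (a : Fin n → ZMod d) :
    a = 0 ↔ (∀ i : Fin (n - 1), a ⟨i, by omega⟩ = 0) ∧ a (lastIdx n) = 0 := by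
  refine ⟨fun ha => by simp [ha], fun ⟨hinit, hlast⟩ => funext fun j => ?_⟩
  by_cases hj : j.val < n - 1
  · exact hinit ⟨j, hj⟩
  · rw [Pi.zero_apply, show j = lastIdx n from Fin.ext (show j.val = n - 1 by omega)]
    exact hlast

lemma sum_stdAddChar_pairing [NeZero d] (a : Fin n → ZMod d) :
    ∑ z : Fin (n - 1) → ZMod d, ∑ x : ZMod d, 𝕖 (pairing a z x) =
      if a = 0 then (d : ℂ) ^ n else 0 := by
  calc ∑ z : Fin (n - 1) → ZMod d, ∑ x : ZMod d, 𝕖 (pairing a z x)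
      = (∏ i : Fin (n - 1), ∑ t : ZMod d, 𝕖 (a ⟨i, by omega⟩ * t)) *
          ∑ x : ZMod d, 𝕖 (a (lastIdx n) * x) := by
        simp only [pairing, AddChar.map_add_eq_mul, AddChar.map_finset_sum, Fintype.prod_sum,
          Finset.sum_mul_sum]
    _ = (∏ i : Fin (n - 1), if a ⟨i, by omega⟩ = 0 then (d : ℂ) else 0) *
          if a (lastIdx n) = 0 then (d : ℂ) else 0 := by
        simp only [sum_stdAddChar_mul]
    _ = if a = 0 then (d : ℂ) ^ n else 0 := by
        simp only [Finset.prod_ite_zero, Finset.mem_univ, true_implies, ite_zero_mul_ite_zero,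
          Finset.prod_const, Finset.card_univ, Fintype.card_fin, ← pow_succ,
          Nat.sub_add_cancel NeZero.one_le, ← eq_zero_iff_init_and_last]

end Pairing

section Support
variable {d n : ℕ}

-- The partial sums `sᵢ = zᵢ + ⋯ + z_{n−1}` (and `s_n = 0`), written exactly as inside `Phi`.
def tailSums (z : Fin (n - 1) → ZMod d) (i : Fin n) : ZMod d :=
  if h : i.val < n - 1 then
    ∑ j ∈ Finset.univ.filter (fun j : Fin (n - 1) => (⟨i.val, h⟩ : Fin (n - 1)) ≤ j), z j
  else 0

lemma tailSums_last [NeZero n] (z : Fin (n - 1) → ZMod d) : tailSums z (lastIdx n) = 0 :=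
  dif_neg (by simp)

lemma tailSums_succ (z : Fin (n - 1) → ZMod d) (i : Fin (n - 1)) :
    tailSums z ⟨i, by omega⟩ = z i + tailSums z ⟨i + 1, by omega⟩ := by
  rw [tailSums, tailSums, dif_pos i.isLt]
  by_cases hsucc : i.val + 1 < n - 1
  · have hsplit : Finset.univ.filter (fun j : Fin (n - 1) => (⟨i, i.isLt⟩ : Fin (n - 1)) ≤ j) =
        insert i (Finset.univ.filter fun j : Fin (n - 1) => ⟨i + 1, hsucc⟩ ≤ j) := by
      ext j
      simp only [Finset.mem_filter, Finset.mem_univ, true_and, Finset.mem_insert, Fin.le_def,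
        Fin.ext_iff]
      omega
    rw [dif_pos hsucc, hsplit, Finset.sum_insert (by simp [Fin.le_def])]
  · have hsingle :
        Finset.univ.filter (fun j : Fin (n - 1) => (⟨i, i.isLt⟩ : Fin (n - 1)) ≤ j) = {i} := by
      ext j
      simp only [Finset.mem_filter, Finset.mem_univ, true_and, Finset.mem_singleton, Fin.le_def,
        Fin.ext_iff]
      omega
    rw [dif_neg hsucc, hsingle, Finset.sum_singleton, add_zero]

lemma tailSums_injective :
    Function.Injective (tailSums : (Fin (n - 1) → ZMod d) → Fin n → ZMod d) := by
  intro z z' h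
  funext i
  have hstep := tailSums_succ z i
  rw [h, tailSums_succ z' i] at hstep
  exact (add_right_cancel hstep).symm

def supportPoint (z : Fin (n - 1) → ZMod d) (k : ZMod d) : Fin n → ZMod d :=
  fun i => tailSums z i + k

lemma supportPoint_last [NeZero n] (z : Fin (n - 1) → ZMod d) (k : ZMod d) :
    supportPoint z k (lastIdx n) = k := by
  rw [supportPoint, tailSums_last, zero_add]

lemma supportPoint_sub_succ (z : Fin (n - 1) → ZMod d) (k : ZMod d) (i : Fin (n - 1)) :
    supportPoint z k ⟨i, by omega⟩ - supportPoint z k ⟨i + 1, by omega⟩ = z i := by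
  simp only [supportPoint, tailSums_succ z i]
  ring

lemma supportPoint_sub_one (z : Fin (n - 1) → ZMod d) (k : ZMod d) :
    supportPoint z (k - 1) = supportPoint z k - 1 := by
  ext i
  simp only [supportPoint, Pi.sub_apply, Pi.one_apply]
  ring

lemma supportPoint_inj [NeZero n] {z z' : Fin (n - 1) → ZMod d} {k k' : ZMod d} :
    supportPoint z k = supportPoint z' k' ↔ z = z' ∧ k = k' := by
  refine ⟨fun h => ?_, fun ⟨hz, hk⟩ => hz ▸ hk ▸ rfl⟩
  have hk : k = k' := by
    simpa only [supportPoint_last] using congrFun h (lastIdx n)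
  subst hk
  exact ⟨tailSums_injective (funext fun i => add_right_cancel (congrFun h i)), rfl⟩

lemma supportPoint_bijective [NeZero d] [NeZero n] :
    Function.Bijective fun p : (Fin (n - 1) → ZMod d) × ZMod d => supportPoint p.1 p.2 := by
  refine (Fintype.bijective_iff_injective_and_card _).mpr
    ⟨fun p q h => Prod.ext_iff.mpr (supportPoint_inj.mp h), ?_⟩
  simp only [Fintype.card_prod, Fintype.card_fun, ZMod.card, Fintype.card_fin, ← pow_succ,
    Nat.sub_add_cancel NeZero.one_le]

end Support

lemma ofReal_sqrt_mul_self (d : ℕ) : (Real.sqrt d : ℂ) * Real.sqrt d = d := by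
  rw [← Complex.ofReal_mul, Real.mul_self_sqrt (Nat.cast_nonneg d), Complex.ofReal_natCast]

section Phi
variable {d n : ℕ} [NeZero d] [NeZero n]

lemma Phi_apply (z : Fin (n - 1) → ZMod d) (x : ZMod d) (v : Fin n → ZMod d) :
    Phi d n z x v = if v = supportPoint z (v (lastIdx n))
      then (Real.sqrt d : ℂ)⁻¹ * 𝕖 (-(v (lastIdx n) * x)) else 0 := by
  have hcoef : ∀ k : ZMod d, (omg d ^ (k.val * x.val))⁻¹ = 𝕖 (-(k * x)) := fun k => by
    rw [pow_mul, omg_pow_val, ← AddChar.map_nsmul_eq_pow, nsmul_eq_mul, ZMod.natCast_zmod_val,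
      AddChar.map_neg_eq_inv, mul_comm]
  have hcond : ∀ k, (∀ i, v i = tailSums z i + k) ↔ v = supportPoint z k :=
    fun _ => funext_iff.symm
  change (Real.sqrt d : ℂ)⁻¹ * ∑ k : ZMod d, (omg d ^ (k.val * x.val))⁻¹ *
    (if ∀ i, v i = tailSums z i + k then 1 else 0) = _
  simp_rw [hcoef, hcond, mul_ite, mul_one, mul_zero]
  rw [Finset.sum_eq_single (v (lastIdx n))
    (fun k _ hk => if_neg fun hv => hk (by rw [hv, supportPoint_last])) (by simp), mul_ite,
    mul_zero]

lemma Phi_supportPoint (z z' : Fin (n - 1) → ZMod d) (x k : ZMod d) :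
    Phi d n z x (supportPoint z' k) =
      if z' = z then (Real.sqrt d : ℂ)⁻¹ * 𝕖 (-(k * x)) else 0 := by
  rw [Phi_apply, supportPoint_last]
  simp only [supportPoint_inj, and_true]

lemma dotc_Phi (p q : (Fin (n - 1) → ZMod d) × ZMod d) :
    dotc (Phi d n p.1 p.2) (Phi d n q.1 q.2) = if p = q then 1 else 0 := by
  obtain ⟨z, x⟩ := p
  obtain ⟨z', x'⟩ := q
  have hterm : ∀ k : ZMod d, starRingEnd ℂ ((Real.sqrt d : ℂ)⁻¹ * 𝕖 (-(k * x))) *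
      ((Real.sqrt d : ℂ)⁻¹ * 𝕖 (-(k * x'))) = (d : ℂ)⁻¹ * 𝕖 ((x - x') * k) := fun k => by
    rw [map_mul, map_inv₀, Complex.conj_ofReal, ← AddChar.map_neg_eq_conj, neg_neg,
      mul_mul_mul_comm, ← mul_inv, ofReal_sqrt_mul_self, ← AddChar.map_add_eq_mul]
    ring_nf
  rw [dotc, ← supportPoint_bijective.sum_comp, Fintype.sum_prod_type]
  simp only [Phi_supportPoint, apply_ite (starRingEnd ℂ), map_zero, ite_mul, mul_ite, zero_mul,
    mul_zero, hterm, Finset.sum_ite_irrel, Finset.sum_const_zero, Finset.sum_ite_eq',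
    Finset.mem_univ, if_true, ← Finset.mul_sum, sum_stdAddChar_mul, sub_eq_zero, Prod.mk.injEq]
  rw [inv_mul_cancel₀ (Nat.cast_ne_zero.mpr (NeZero.ne d)), ← ite_and]
  exact if_congr (and_congr_left' eq_comm) rfl rfl

lemma single_Zd_mul_inv_mulVec_Phi (z : Fin (n - 1) → ZMod d) (x : ZMod d) (i : Fin (n - 1)) :
    (_root_.single (⟨i, by omega⟩ : Fin n) (Zd d) *
        (_root_.single (⟨i + 1, by omega⟩ : Fin n) (Zd d))⁻¹) *ᵥ Phi d n z x =
      𝕖 (z i) • Phi d n z x := by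
  rw [single_Zd_mul_inv]
  refine diagonal_mulVec_eq_smul fun v hv => ?_
  have hsupp : v = supportPoint z (v (lastIdx n)) := by
    by_contra h
    rw [Phi_apply, if_neg h] at hv
    exact hv rfl
  rw [hsupp, supportPoint_sub_succ]

lemma tensorOp_Xd_mulVec_Phi (z : Fin (n - 1) → ZMod d) (x : ZMod d) :
    tensorOp (fun _ => Xd d) *ᵥ Phi d n z x = 𝕖 x • Phi d n z x := by
  rw [tensorOp_Xd_mulVec]
  ext v
  have hlast : (v - 1) (lastIdx n) = v (lastIdx n) - 1 := rfl
  simp only [Pi.smul_apply, smul_eq_mul, Phi_apply, hlast, supportPoint_sub_one, sub_left_inj,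
    mul_ite, mul_zero]
  congr 1
  rw [mul_left_comm, ← AddChar.map_add_eq_mul]
  ring_nf

lemma Ug_mulVec_Phi (g : Fin n → ZMod d) (z : Fin (n - 1) → ZMod d) (x : ZMod d) :
    Ug d n g *ᵥ Phi d n z x = 𝕖 (pairing g z x) • Phi d n z x := by
  have hX := pow_mulVec_of_mulVec_eq_smul (tensorOp_Xd_mulVec_Phi z x) (g (lastIdx n)).val
  have hZ := list_prod_mulVec_of_mulVec_eq_smul
    (fun i => pow_mulVec_of_mulVec_eq_smul (single_Zd_mul_inv_mulVec_Phi z x i)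
      (g ⟨i, by omega⟩).val) (List.finRange (n - 1))
  rw [Ug, ← mulVec_mulVec, hX, mulVec_smul, hZ, smul_smul, ← Fin.prod_univ_def]
  simp only [← AddChar.map_nsmul_eq_pow, nsmul_eq_mul, ZMod.natCast_zmod_val,
    ← AddChar.map_finset_sum, ← AddChar.map_add_eq_mul, pairing, add_comm]

lemma Ug_zero : Ug d n 0 = 1 := by
  simp [Ug]

lemma dotc_Ug_mulVec_sum_smul_Phi {c : (Fin (n - 1) → ZMod d) × ZMod d → ℂ}
    (hc : ∀ p, starRingEnd ℂ (c p) * c p = ((d : ℂ) ^ n)⁻¹) (g h : Fin n → ZMod d) :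
    dotc (Ug d n g *ᵥ ∑ p, c p • Phi d n p.1 p.2) (Ug d n h *ᵥ ∑ p, c p • Phi d n p.1 p.2) =
      if g = h then 1 else 0 := by
  have hterm : ∀ p : (Fin (n - 1) → ZMod d) × ZMod d,
      starRingEnd ℂ (c p * 𝕖 (pairing g p.1 p.2)) * (c p * 𝕖 (pairing h p.1 p.2)) =
        ((d : ℂ) ^ n)⁻¹ * 𝕖 (pairing (h - g) p.1 p.2) := fun p => by
    rw [map_mul, mul_mul_mul_comm, hc, ← AddChar.map_neg_eq_conj,
      ← AddChar.map_add_eq_mul, neg_add_eq_sub, pairing_sub]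
  simp only [mulVec_sum, mulVec_smul, Ug_mulVec_Phi, smul_smul]
  rw [dotc_sum_smul_of_orthonormal dotc_Phi, Finset.sum_congr rfl fun p _ => hterm p,
    ← Finset.mul_sum, Fintype.sum_prod_type, sum_stdAddChar_pairing, mul_ite, mul_zero,
    inv_mul_cancel₀ (pow_ne_zero n (Nat.cast_ne_zero.mpr (NeZero.ne d)))]
  exact if_congr (sub_eq_zero.trans eq_comm) rfl rfl

end Phi

lemma conj_mul_self_inv_sqrt_pow_mul_exp (d n : ℕ) (a : ℝ) :
    starRingEnd ℂ (((Real.sqrt d : ℂ) ^ n)⁻¹ * Complex.exp (a * Complex.I)) *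
      (((Real.sqrt d : ℂ) ^ n)⁻¹ * Complex.exp (a * Complex.I)) = ((d : ℂ) ^ n)⁻¹ := by
  rw [Complex.conj_mul', norm_mul, Complex.norm_exp_ofReal_mul_I, mul_one, norm_inv, norm_pow,
    Complex.norm_real, Real.norm_of_nonneg (Real.sqrt_nonneg _)]
  push_cast
  rw [inv_pow, ← pow_mul, mul_comm, pow_mul, sq, ofReal_sqrt_mul_self]

theorem stmt2_general (d n : ℕ) [NeZero d] [NeZero n]
    (α : (Fin (n - 1) → ZMod d) → ZMod d → ℝ) :
    let ψ : (Fin n → ZMod d) → ℂ := fun v =>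
      ((Real.sqrt d : ℂ) ^ n)⁻¹ * ∑ z : Fin (n - 1) → ZMod d, ∑ x : ZMod d,
        Complex.exp (α z x * Complex.I) * Phi d n z x v
    (dotc ψ ψ = 1) ∧
    (∀ g h : Fin n → ZMod d,
      dotc (Ug d n g *ᵥ ψ) (Ug d n h *ᵥ ψ) = if g = h then 1 else 0) ∧
    Submodule.span ℂ (Set.range fun g : Fin n → ZMod d => Ug d n g *ᵥ ψ) = ⊤ := by
  intro ψ
  set c : (Fin (n - 1) → ZMod d) × ZMod d → ℂ :=
    fun p => ((Real.sqrt d : ℂ) ^ n)⁻¹ * Complex.exp (α p.1 p.2 * Complex.I)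
  have hψ : ψ = ∑ p, c p • Phi d n p.1 p.2 := by
    ext v
    simp only [ψ, c, Finset.sum_apply, Pi.smul_apply, smul_eq_mul, Fintype.sum_prod_type,
      Finset.mul_sum, mul_assoc]
  have horth : ∀ g h, dotc (Ug d n g *ᵥ ψ) (Ug d n h *ᵥ ψ) = if g = h then 1 else 0 := by
    rw [hψ]
    exact dotc_Ug_mulVec_sum_smul_Phi fun p => conj_mul_self_inv_sqrt_pow_mul_exp d n _
  exact ⟨by simpa [Ug_zero] using horth 0 0, horth, span_eq_top_of_dotc_orthonormal horth rfl⟩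

theorem stmt2 (d n : ℕ) [NeZero d] [NeZero n] (hd : 2 ≤ d) (hn : 2 ≤ n)
    (α : (Fin (n - 1) → ZMod d) → ZMod d → ℝ) :
    let ψ : (Fin n → ZMod d) → ℂ := fun v =>
      ((Real.sqrt d : ℂ) ^ n)⁻¹ * ∑ z : Fin (n - 1) → ZMod d, ∑ x : ZMod d,
        Complex.exp (α z x * Complex.I) * Phi d n z x v
    (dotc ψ ψ = 1) ∧
    (∀ g h : Fin n → ZMod d,
      dotc (Ug d n g *ᵥ ψ) (Ug d n h *ᵥ ψ) = if g = h then 1 else 0) ∧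
    Submodule.span ℂ (Set.range fun g : Fin n → ZMod d => Ug d n g *ᵥ ψ) = ⊤ :=
  stmt2_general d n α
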